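/- arXiv:2603.20943 — 5 statements merged into one kernel-verified Lean document; each statement's English description precedes it below -/
import Mathlib

section
/- Let Q = [x₁⁻,x₁⁺] × ⋯ × [x_d⁻,x_d⁺] be an axis-parallel box in ℝ^d whose minimal corner (x₁⁻,…,x_d⁻) satisfies 1 + δ(i−1) ≤ x₁⁻ + ⋯ + x_d⁻ ≤ 1 + δ·i for some δ > 0 and integer i. Then the (d−1)-dimensional volume of the intersection of Q with the hyperplane H = {x : x₁ + ⋯ + x_d = 1 + δ·i} is at most c_d · δ^{d−1}, where c_d depends only on d. -/
open MeasureTheory Set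
open scoped NNReal ENNReal

/-!
Put `s = 1 + δ i`. Since `x - a ≥ 0` has coordinate sum `s - ∑ a ≤ δ` for every `x` in the
slice, each `x k` lies in `[a k, a k + δ]`. A point of the hyperplane `∑ x = s` is determined by
its last `d - 1` coordinates, so the slice is the image of a cube of side at most `δ` in
`ℝ^(d-1)` under the affine parametrization `y ↦ (s - ∑ y, y)`. Its linear part depends only on
`d`, so it is `K`-Lipschitz with `K` depending only on `d`, and a `K`-Lipschitz map enlarges the
`(d-1)`-dimensional Hausdorff measure, which is Lebesgue measure on `ℝ^(d-1)`, by at most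
`K^(d-1)`.
-/

/-- `y ↦ (-∑ y, y)`; translated by `s • e₀` it parametrizes the hyperplane `∑ x = s`. -/
noncomputable def sumHyperplaneParam (n : ℕ) : (Fin n → ℝ) →L[ℝ] EuclideanSpace ℝ (Fin (n + 1)) :=
  (EuclideanSpace.equiv (Fin (n + 1)) ℝ).symm.toContinuousLinearMap ∘L
    ContinuousLinearMap.finCons (-∑ k, ContinuousLinearMap.proj k) (ContinuousLinearMap.id ℝ _)

theorem sumHyperplaneParam_apply_zero {n : ℕ} (y : Fin n → ℝ) :
    sumHyperplaneParam n y 0 = -∑ k, y k := by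
  simp [sumHyperplaneParam]

theorem sumHyperplaneParam_apply_succ {n : ℕ} (y : Fin n → ℝ) (k : Fin n) :
    sumHyperplaneParam n y k.succ = y k := by
  simp [sumHyperplaneParam]

theorem eq_sumHyperplaneParam_add_single {n : ℕ} {s : ℝ} {x : EuclideanSpace ℝ (Fin (n + 1))}
    (hx : ∑ k, x k = s) :
    x = sumHyperplaneParam n (Fin.tail x) + EuclideanSpace.single 0 s := by
  ext j
  cases j using Fin.cases with
  | zero =>
    rw [Fin.sum_univ_succ] at hx
    simp [sumHyperplaneParam_apply_zero, Fin.tail, ← hx]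
  | succ k => simp [sumHyperplaneParam_apply_succ, Fin.tail]

theorem sumHyperplane_inter_subset_image {n : ℕ} (s : ℝ) (a : Fin (n + 1) → ℝ) :
    {x : EuclideanSpace ℝ (Fin (n + 1)) | ∑ k, x k = s} ∩ {x | ∀ k, a k ≤ x k} ⊆
      (fun y => sumHyperplaneParam n y + EuclideanSpace.single 0 s) ''
        univ.pi fun k => Icc (a k.succ) (a k.succ + (s - ∑ j, a j)) := by
  rintro x ⟨hs : ∑ k, x k = s, ha : ∀ k, a k ≤ x k⟩
  refine ⟨Fin.tail x, fun k _ => ⟨ha k.succ, ?_⟩, (eq_sumHyperplaneParam_add_single hs).symm⟩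
  have := Finset.single_le_sum (f := fun j => x j - a j) (fun j _ => sub_nonneg.2 (ha j))
    (Finset.mem_univ k.succ)
  rw [Finset.sum_sub_distrib, hs] at this
  simp only [Fin.tail]
  linarith

theorem hausdorffMeasure_sumHyperplane_inter_le (n : ℕ) (s : ℝ) (a : Fin (n + 1) → ℝ) :
    μH[n] ({x : EuclideanSpace ℝ (Fin (n + 1)) | ∑ k, x k = s} ∩ {x | ∀ k, a k ≤ x k}) ≤
      (‖sumHyperplaneParam n‖₊ : ℝ≥0∞) ^ n * ENNReal.ofReal (s - ∑ k, a k) ^ n := by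
  set L := sumHyperplaneParam n
  have hL : LipschitzWith ‖L‖₊ fun y => L y + EuclideanSpace.single 0 s :=
    LipschitzWith.of_dist_le_mul fun y z => by
      rw [dist_add_right]; exact L.lipschitz.dist_le_mul y z
  calc _ ≤ μH[n] ((fun y => L y + EuclideanSpace.single 0 s) ''
        univ.pi fun k => Icc (a k.succ) (a k.succ + (s - ∑ j, a j))) :=
        measure_mono (sumHyperplane_inter_subset_image s a)
    _ ≤ (‖L‖₊ : ℝ≥0∞) ^ (n : ℝ) * μH[Fintype.card (Fin n)]
        (univ.pi fun k : Fin n => Icc (a k.succ) (a k.succ + (s - ∑ j, a j))) := by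
        simpa using hL.hausdorffMeasure_image_le n.cast_nonneg _
    _ = _ := by
        rw [hausdorffMeasure_pi_real, volume_pi_pi]
        simp

/-- If the minimal corner of an axis-parallel box has coordinate sum between `1 + δ(i−1)` and
`1 + δ·i`, then the `(d−1)`-dimensional Hausdorff measure of the slice of the box by the
hyperplane `{x : ∑ x = 1 + δ·i}` is at most `c_d · δ^(d−1)`. -/
theorem stmt2 (d : ℕ) :
    ∃ c : ℝ, 0 < c ∧
      ∀ (δ : ℝ), 0 < δ → ∀ (i : ℕ) (a b : Fin d → ℝ), (∀ k, a k ≤ b k) →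
        1 + δ * ((i : ℝ) - 1) ≤ ∑ k, a k → ∑ k, a k ≤ 1 + δ * (i : ℝ) →
        MeasureTheory.Measure.hausdorffMeasure ((d : ℝ) - 1)
          ({x : EuclideanSpace ℝ (Fin d) | ∑ k, x k = 1 + δ * (i : ℝ)} ∩
            {x : EuclideanSpace ℝ (Fin d) | ∀ k, x k ∈ Set.Icc (a k) (b k)})
          ≤ ENNReal.ofReal (c * δ ^ (d - 1)) := by
  refine ⟨‖sumHyperplaneParam (d - 1)‖ ^ (d - 1) + 1, by positivity, ?_⟩
  intro δ hδ i a b _ hlow _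
  cases d with
  | zero =>
    suffices hempty : {x : EuclideanSpace ℝ (Fin 0) | ∑ k, x k = 1 + δ * (i : ℝ)} = ∅ by
      rw [hempty, empty_inter, measure_empty]
      exact zero_le
    refine eq_empty_of_forall_notMem fun x (hx : ∑ k, x k = _) => ?_
    rw [Finset.univ_eq_empty, Finset.sum_empty] at hx
    have : 0 < 1 + δ * (i : ℝ) := by positivity
    linarith
  | succ n =>
    set s := 1 + δ * (i : ℝ)
    have hside : s - ∑ k, a k ≤ δ := by linarith
    calc μH[((n + 1 : ℕ) : ℝ) - 1] _
        ≤ μH[n] ({x : EuclideanSpace ℝ (Fin (n + 1)) | ∑ k, x k = s} ∩ {x | ∀ k, a k ≤ x k}) := by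
          rw [Nat.cast_succ, add_sub_cancel_right]
          exact measure_mono (inter_subset_inter_right _ fun x hx k => (hx k).1)
      _ ≤ (‖sumHyperplaneParam n‖₊ : ℝ≥0∞) ^ n * ENNReal.ofReal δ ^ n := by
          grw [hausdorffMeasure_sumHyperplane_inter_le, hside]
      _ ≤ ENNReal.ofReal ((‖sumHyperplaneParam n‖ ^ n + 1) * δ ^ n) := by
          rw [← ENNReal.ofReal_coe_nnreal, coe_nnnorm, ← ENNReal.ofReal_pow (norm_nonneg _),
            ← ENNReal.ofReal_pow hδ.le, ← ENNReal.ofReal_mul (by positivity)]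
          gcongr
          exact le_add_of_nonneg_right zero_le_one
end

section
/- Let P be a nonempty finite set of points in [0,1]^d and, for each vector v ∈ {−1,1}^d, let O_v be the orthant {x ∈ ℝ^d : x_i·v_i ≥ 0 for all i} and define CH_v(P) = (conv(P) + O_{−v}) ∩ [0,1]^d (Minkowski sum). Then conv(P) equals the intersection over all v ∈ {−1,1}^d of CH_v(P). -/
open Set Pointwise RealInnerProductSpace

/-!
Each `CH_v(P)` contains `conv(P)`, since `0 ∈ O_{-v}` and `conv(P) ⊆ [0,1]^d`. Conversely, let `u`
lie in every `CH_v(P)` and let `p` be the point of the compact convex set `conv(P)` nearest to `u`.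
Take `v` to be the sign pattern of `u - p` and write `u = q + w` with `q ∈ conv(P)`, `w ∈ O_{-v}`.
Then `⟪u - p, u - q⟫ = ⟪u - p, w⟫ ≤ 0` coordinatewise and `⟪u - p, q - p⟫ ≤ 0` by the obtuse-angle
characterisation of the projection, so `‖u - p‖² ≤ 0` and `u = p ∈ conv(P)`.
-/

variable {ι : Type*}

lemma convex_setOf_forall_apply_mem {S : Set ℝ} (hS : Convex ℝ S) :
    Convex ℝ {x : EuclideanSpace ℝ ι | ∀ i, x i ∈ S} := by
  simpa [Set.preimage, Set.pi] using
    (convex_pi (s := univ) fun _ _ => hS).linear_preimage (EuclideanSpace.equiv ι ℝ).toLinearMap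

lemma inner_nonpos_of_forall_apply_mul_nonpos [Fintype ι] {y w : EuclideanSpace ℝ ι}
    (h : ∀ i, y i * w i ≤ 0) : ⟪y, w⟫ ≤ 0 := by
  rw [PiLp.inner_apply]
  refine Finset.sum_nonpos fun i _ => ?_
  simpa [mul_comm] using h i

lemma mul_nonpos_of_nonneg_mul_neg_ite {a b : ℝ} (h : 0 ≤ b * -(if 0 ≤ a then 1 else -1)) :
    a * b ≤ 0 := by
  split_ifs at h with ha
  · exact mul_nonpos_of_nonneg_of_nonpos ha (by linarith)
  · exact mul_nonpos_of_nonpos_of_nonneg (by linarith) (by linarith)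

theorem mem_of_forall_mem_add_orthant [Fintype ι] {K : Set (EuclideanSpace ℝ ι)}
    (hKc : IsClosed K) (hK : Convex ℝ K) {u : EuclideanSpace ℝ ι}
    (hu : ∀ v ∈ {v : ι → ℝ | ∀ i, v i = 1 ∨ v i = -1},
      u ∈ K + {x : EuclideanSpace ℝ ι | ∀ i, 0 ≤ x i * -v i}) :
    u ∈ K := by
  have hne : K.Nonempty := by
    obtain ⟨q, hq, -⟩ := hu (fun _ => 1) fun _ => Or.inl rfl
    exact ⟨q, hq⟩
  obtain ⟨p, hp, hpmin⟩ := exists_norm_eq_iInf_of_complete_convex hne hKc.isComplete hK u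
  have hproj := (norm_eq_iInf_iff_real_inner_le_zero hK hp).mp hpmin
  let v : ι → ℝ := fun i => if 0 ≤ (u - p) i then 1 else -1
  obtain ⟨q, hq, w, hw, hqw : q + w = u⟩ := hu v fun i => by dsimp only [v]; split_ifs <;> simp
  have hw_inner : ⟪u - p, w⟫ ≤ 0 :=
    inner_nonpos_of_forall_apply_mul_nonpos fun i => mul_nonpos_of_nonneg_mul_neg_ite (hw i)
  have hself : ⟪u - p, u - p⟫ ≤ 0 := by
    have hsplit : u - p = w + (q - p) := by rw [← hqw]; abel
    calc ⟪u - p, u - p⟫ = ⟪u - p, w⟫ + ⟪u - p, q - p⟫ := by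
          rw [← inner_add_right, ← hsplit]
      _ ≤ 0 := add_nonpos hw_inner (hproj q hq)
  rwa [sub_eq_zero.mp (real_inner_self_nonpos.mp hself)]

theorem stmt5_general (d : ℕ) (P : Set (EuclideanSpace ℝ (Fin d)))
    (hfin : P.Finite)
    (hsub : P ⊆ {x : EuclideanSpace ℝ (Fin d) | ∀ i, x i ∈ Set.Icc (0:ℝ) 1}) :
    convexHull ℝ P =
      ⋂ v ∈ {v : Fin d → ℝ | ∀ i, v i = 1 ∨ v i = -1},
        ((convexHull ℝ P + {x : EuclideanSpace ℝ (Fin d) | ∀ i, 0 ≤ x i * (-(v i))}) ∩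
          {x : EuclideanSpace ℝ (Fin d) | ∀ i, x i ∈ Set.Icc (0:ℝ) 1}) := by
  have hcube := convexHull_min hsub (convex_setOf_forall_apply_mem (convex_Icc (0:ℝ) 1))
  refine Subset.antisymm (fun x hx => mem_iInter₂.mpr fun v _ => ⟨?_, hcube hx⟩) fun u hu => ?_
  · exact subset_add_left _ (fun i => by simp) hx
  · exact mem_of_forall_mem_add_orthant (hfin.isCompact_convexHull ℝ).isClosed
      (convex_convexHull ℝ P) fun v hv => (mem_iInter₂.mp hu v hv).1

/-- `conv(P)` equals the intersection over all sign vectors `v ∈ {−1,1}^d` of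
`CH_v(P) = (conv(P) + O_{−v}) ∩ [0,1]^d`, for a nonempty finite `P ⊆ [0,1]^d`. -/
theorem stmt5 (d : ℕ) (P : Set (EuclideanSpace ℝ (Fin d))) (hne : P.Nonempty)
    (hfin : P.Finite)
    (hsub : P ⊆ {x : EuclideanSpace ℝ (Fin d) | ∀ i, x i ∈ Set.Icc (0:ℝ) 1}) :
    convexHull ℝ P =
      ⋂ v ∈ {v : Fin d → ℝ | ∀ i, v i = 1 ∨ v i = -1},
        ((convexHull ℝ P + {x : EuclideanSpace ℝ (Fin d) | ∀ i, 0 ≤ x i * (-(v i))}) ∩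
          {x : EuclideanSpace ℝ (Fin d) | ∀ i, x i ∈ Set.Icc (0:ℝ) 1}) :=
  stmt5_general d P hfin hsub
end

section
/- Suppose an algorithm subdividing [0,1]^d into dyadic cubes produces, at level i, a collection 𝓡 of pairwise interior-disjoint dyadic cubes of side length 2^{−i}. For any convex body C ⊆ ℝ^d, the number of cubes of 𝓡 whose boundary intersects the boundary of C on a fixed axis-parallel hyperplane section is controlled by the (d−1)-dimensional instance of the same bound, leading to: the number of cubes in the full dyadic grid of side 2^{−i} in [0,1]^d intersecting ∂C is at most c_d · 2^{i(d−1)} for a constant c_d depending only on d. -/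
/-!
Every boundary point `x` of a closed convex set has a supporting functional `ν`; scaling it so
that a coordinate of maximal absolute value becomes `ν j = ±1` sorts the boundary into `2d`
classes. Testing the support inequality at `x'` against another point `x` of the same class gives
`±(x j - x' j) ≤ ∑_{k ≠ j} |x k - x' k|`, so the class meets at most `d + 1` cells of any column
of the grid in direction `j`. There are `N ^ (d - 1)` such columns.
-/

open Set Finset Matrix

/-- A supporting hyperplane at a non-interior point: separate the point from the interior when it
is nonempty, and otherwise take a functional vanishing on the direction of the affine span. -/
theorem Convex.exists_dual_le_of_notMem_interior {E : Type*} [NormedAddCommGroup E]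
    [NormedSpace ℝ E] [FiniteDimensional ℝ E] {C : Set E} (hC : Convex ℝ C) {x : E}
    (hxC : x ∈ C) (hx : x ∉ interior C) :
    ∃ f : Module.Dual ℝ E, f ≠ 0 ∧ ∀ y ∈ C, f y ≤ f x := by
  by_cases hint : (interior C).Nonempty
  · obtain ⟨f, hf0, hf⟩ := geometric_hahn_banach_of_nonempty_interior_point hC hx hint
    exact ⟨f, fun h => hf0 (ContinuousLinearMap.coe_injective h), hf⟩
  · have hspan : affineSpan ℝ C ≠ ⊤ := fun h =>
      hint (hC.interior_nonempty_iff_affineSpan_eq_top.2 h)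
    have hdir : (affineSpan ℝ C).direction < ⊤ := lt_top_iff_ne_top.2 fun h => hspan <|
      (AffineSubspace.direction_eq_top_iff_of_nonempty ((affineSpan_nonempty ℝ).2 ⟨x, hxC⟩)).1 h
    obtain ⟨f, hf0, hfdir⟩ := Submodule.exists_dual_map_eq_bot_of_lt_top hdir inferInstance
    refine ⟨f, hf0, fun y hy => le_of_eq ?_⟩
    have hyx : y - x ∈ (affineSpan ℝ C).direction :=
      AffineSubspace.vsub_mem_direction (subset_affineSpan ℝ C hy) (subset_affineSpan ℝ C hxC)
    have : f (y - x) = 0 := by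
      simpa [hfdir] using Submodule.mem_map_of_mem (f := f) hyx
    rwa [map_sub, sub_eq_zero] at this

theorem Convex.exists_dotProduct_le_of_notMem_interior {ι : Type*} [Fintype ι]
    {C : Set (ι → ℝ)} (hC : Convex ℝ C) {x : ι → ℝ} (hxC : x ∈ C) (hx : x ∉ interior C) :
    ∃ ν : ι → ℝ, ν ≠ 0 ∧ ∀ y ∈ C, ν ⬝ᵥ y ≤ ν ⬝ᵥ x := by
  classical
  obtain ⟨f, hf0, hf⟩ := hC.exists_dual_le_of_notMem_interior hxC hx
  have hfν : ∀ y, f y = (fun i => f (Pi.single i 1)) ⬝ᵥ y := fun y => by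
    rw [LinearMap.pi_apply_eq_sum_univ f y]
    refine Finset.sum_congr rfl fun i _ => ?_
    rw [smul_eq_mul, mul_comm]
    congr 2
    funext j
    simp [Pi.single_apply, eq_comm]
  refine ⟨fun i => f (Pi.single i 1), fun hν => hf0 (LinearMap.ext fun y => ?_), fun y hy => ?_⟩
  · rw [hfν y, hν, zero_dotProduct, LinearMap.zero_apply]
  · rw [← hfν, ← hfν]
    exact hf y hy

variable {ι : Type*}

def gridCell (N : ℕ) (k : ι → Fin N) : Set (ι → ℝ) :=
  {x | ∀ j, x j ∈ Icc ((k j : ℝ) / N) (((k j : ℝ) + 1) / N)}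

theorem abs_sub_le_of_mem_gridCell {N : ℕ} {k k' : ι → Fin N} {x x' : ι → ℝ}
    (hx : x ∈ gridCell N k) (hx' : x' ∈ gridCell N k') {l : ι} (hl : k l = k' l) :
    |x l - x' l| ≤ 1 / N := by
  have h₁ := hx l
  have h₂ := hx' l
  rw [← hl] at h₂
  have hw : ((k l : ℝ) + 1) / N = (k l : ℝ) / N + 1 / N := by ring
  rw [abs_le]
  constructor <;> linarith [h₁.1, h₁.2, h₂.1, h₂.2]

variable [Fintype ι]

/-- For `|σ| = 1`, the coordinate `x j` varies on this piece of the boundary by at most the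
`ℓ¹` distance of the other coordinates. -/
def supportClass (C : Set (ι → ℝ)) (j : ι) (σ : ℝ) : Set (ι → ℝ) :=
  {x | x ∈ C ∧ ∃ ν : ι → ℝ, ν j = σ ∧ (∀ k, |ν k| ≤ 1) ∧ ∀ y ∈ C, ν ⬝ᵥ y ≤ ν ⬝ᵥ x}

theorem Convex.exists_mem_supportClass {C : Set (ι → ℝ)} (hC : Convex ℝ C) {x : ι → ℝ}
    (hxC : x ∈ C) (hx : x ∉ interior C) :
    ∃ j, ∃ σ ∈ ({1, -1} : Finset ℝ), x ∈ supportClass C j σ := by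
  obtain ⟨ν, hν0, hν⟩ := hC.exists_dotProduct_le_of_notMem_interior hxC hx
  obtain ⟨i, hi⟩ := Function.ne_iff.1 hν0
  have : Nonempty ι := ⟨i⟩
  obtain ⟨j, -, hj⟩ := Finset.exists_max_image Finset.univ (fun k => |ν k|) Finset.univ_nonempty
  have hνj : 0 < |ν j| := (abs_pos.2 hi).trans_le (hj i (Finset.mem_univ i))
  refine ⟨j, ν j / |ν j|, ?_, hxC, |ν j|⁻¹ • ν, by simp [div_eq_inv_mul], fun k => ?_,
    fun y hy => ?_⟩
  · rcases lt_or_gt_of_ne (abs_pos.1 hνj) with hneg | hpos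
    · simp [abs_of_neg hneg, hneg.ne]
    · simp [abs_of_pos hpos, hpos.ne']
  · rw [Pi.smul_apply, smul_eq_mul, abs_mul, abs_inv, abs_abs, inv_mul_le_one₀ hνj]
    exact hj k (Finset.mem_univ k)
  · rw [smul_dotProduct, smul_dotProduct, smul_eq_mul, smul_eq_mul]
    exact mul_le_mul_of_nonneg_left (hν y hy) (inv_nonneg.2 hνj.le)

theorem mul_sub_le_of_mem_supportClass {C : Set (ι → ℝ)} {j : ι} {σ δ : ℝ} {x x' : ι → ℝ}
    (hx : x ∈ C) (hx' : x' ∈ supportClass C j σ) (hclose : ∀ l, l ≠ j → |x l - x' l| ≤ δ) :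
    σ * (x j - x' j) ≤ ((Fintype.card ι : ℝ) - 1) * δ := by
  classical
  obtain ⟨-, ν, rfl, hν1, hν⟩ := hx'
  have hsplit : ν ⬝ᵥ (x - x') = ν j * (x j - x' j) + ∑ k ∈ univ.erase j, ν k * (x k - x' k) :=
    (Finset.add_sum_erase _ (fun k => ν k * (x - x') k) (Finset.mem_univ j)).symm
  have hrest : -∑ k ∈ univ.erase j, ν k * (x k - x' k) ≤ ((Fintype.card ι : ℝ) - 1) * δ :=
    calc -∑ k ∈ univ.erase j, ν k * (x k - x' k)
        ≤ ∑ k ∈ univ.erase j, |ν k * (x k - x' k)| :=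
          (neg_le_abs _).trans (Finset.abs_sum_le_sum_abs _ _)
      _ ≤ ∑ _k ∈ univ.erase j, δ := Finset.sum_le_sum fun k hk => by
          rw [abs_mul]
          exact (mul_le_of_le_one_left (abs_nonneg _) (hν1 k)).trans
            (hclose k (Finset.ne_of_mem_erase hk))
      _ = ((Fintype.card ι : ℝ) - 1) * δ := by
          rw [Finset.sum_const, Finset.card_erase_of_mem (Finset.mem_univ j), Finset.card_univ,
            nsmul_eq_mul, Nat.cast_pred (Fintype.card_pos_iff.2 ⟨j⟩)]
  have := hν x hx
  rw [← sub_nonpos, ← dotProduct_sub, hsplit] at this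
  linarith

theorem abs_sub_le_of_mem_supportClass {C : Set (ι → ℝ)} {j : ι} {σ δ : ℝ} (hσ : |σ| = 1)
    {x x' : ι → ℝ} (hx : x ∈ supportClass C j σ) (hx' : x' ∈ supportClass C j σ)
    (hclose : ∀ l, l ≠ j → |x l - x' l| ≤ δ) :
    |x j - x' j| ≤ ((Fintype.card ι : ℝ) - 1) * δ := by
  have h₁ := mul_sub_le_of_mem_supportClass hx.1 hx' hclose
  have h₂ := mul_sub_le_of_mem_supportClass hx'.1 hx fun l hl => abs_sub_comm (x l) _ ▸ hclose l hl
  calc |x j - x' j| = |σ * (x j - x' j)| := by rw [abs_mul, hσ, one_mul]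
    _ ≤ ((Fintype.card ι : ℝ) - 1) * δ := abs_le.2 ⟨by linarith, h₁⟩

theorem val_le_add_card_of_gridCell_inter_supportClass {N : ℕ} {C : Set (ι → ℝ)} {j : ι}
    {σ : ℝ} (hσ : |σ| = 1) {k k' : ι → Fin N} (hkk' : ∀ l, l ≠ j → k l = k' l)
    (hk : (gridCell N k ∩ supportClass C j σ).Nonempty)
    (hk' : (gridCell N k' ∩ supportClass C j σ).Nonempty) :
    (k j : ℕ) ≤ k' j + Fintype.card ι := by
  obtain ⟨x, hxk, hxS⟩ := hk
  obtain ⟨x', hx'k, hx'S⟩ := hk'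
  have hN : (0 : ℝ) < N := Nat.cast_pos.2 (k j).pos
  have hxj := abs_sub_le_of_mem_supportClass hσ hxS hx'S fun l hl =>
    abs_sub_le_of_mem_gridCell hxk hx'k (hkk' l hl)
  have : (k j : ℝ) / N ≤ ((k' j : ℝ) + Fintype.card ι) / N := by
    have hw : ((k' j : ℝ) + Fintype.card ι) / N
        = ((k' j : ℝ) + 1) / N + ((Fintype.card ι : ℝ) - 1) * (1 / N) := by ring
    linarith [(hxk j).1, (hx'k j).2, (abs_le.1 hxj).2]
  exact_mod_cast (div_le_div_iff_of_pos_right hN).1 this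

theorem Finset.card_le_of_column_spread [DecidableEq ι] {N m : ℕ} (j : ι)
    (S : Finset (ι → Fin N))
    (hS : ∀ k ∈ S, ∀ k' ∈ S, (∀ l, l ≠ j → k l = k' l) → (k j : ℕ) ≤ k' j + m) :
    #S ≤ (m + 1) * N ^ (Fintype.card ι - 1) := by
  let proj : (ι → Fin N) → ({l // l ≠ j} → Fin N) := fun k l => k l
  have hfiber : ∀ b ∈ S.image proj, #{k ∈ S | proj k = b} ≤ m + 1 := by
    intro b hb
    set F := {k ∈ S | proj k = b}
    obtain ⟨k₀, hk₀, hmin⟩ := Finset.exists_min_image F (fun k => (k j : ℕ))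
      (by simpa [F, Finset.filter_nonempty_iff] using hb)
    have hagree : ∀ k ∈ F, ∀ l, l ≠ j → k l = k₀ l := fun k hk l hl =>
      congrFun ((Finset.mem_filter.1 hk).2.trans (Finset.mem_filter.1 hk₀).2.symm) ⟨l, hl⟩
    have hmaps : ∀ k ∈ F, (k j : ℕ) ∈ Finset.Icc (k₀ j : ℕ) (k₀ j + m) :=
      fun k hk => Finset.mem_Icc.2
        ⟨hmin k hk, hS k (Finset.mem_filter.1 hk).1 k₀ (Finset.mem_filter.1 hk₀).1 (hagree k hk)⟩
    have hinj : Set.InjOn (fun k : ι → Fin N => (k j : ℕ)) F := by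
      intro k₁ hk₁ k₂ hk₂ h
      funext l
      by_cases hl : l = j
      · exact hl ▸ Fin.ext h
      · exact (hagree k₁ hk₁ l hl).trans (hagree k₂ hk₂ l hl).symm
    calc #F ≤ #(Finset.Icc (k₀ j : ℕ) (k₀ j + m)) := Finset.card_le_card_of_injOn _ hmaps hinj
      _ = m + 1 := by rw [Nat.card_Icc]; omega
  have himage : #(S.image proj) ≤ N ^ (Fintype.card ι - 1) := by
    refine (Finset.card_le_univ _).trans_eq ?_
    rw [Fintype.card_fun, Fintype.card_fin, Fintype.card_subtype_compl, Fintype.card_subtype_eq]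
  calc #S ≤ (m + 1) * #(S.image proj) := Finset.card_le_mul_card_image S _ hfiber
    _ ≤ (m + 1) * N ^ (Fintype.card ι - 1) := Nat.mul_le_mul_left _ himage

theorem Convex.ncard_gridCell_inter_frontier_le {C : Set (ι → ℝ)} (hC : Convex ℝ C)
    (hcl : IsClosed C) (N : ℕ) :
    {k : ι → Fin N | (gridCell N k ∩ frontier C).Nonempty}.ncard
      ≤ 2 * Fintype.card ι * (Fintype.card ι + 1) * N ^ (Fintype.card ι - 1) := by
  classical
  set P : Finset (ι × ℝ) := Finset.univ ×ˢ {1, -1} with hP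
  let A : ι × ℝ → Finset (ι → Fin N) := fun p =>
    {k | (gridCell N k ∩ supportClass C p.1 p.2).Nonempty}
  have hcover : {k : ι → Fin N | (gridCell N k ∩ frontier C).Nonempty} ⊆ P.biUnion A := by
    rintro k ⟨x, hxk, hx⟩
    obtain ⟨j, σ, hσ, hxj⟩ := hC.exists_mem_supportClass (hcl.frontier_subset hx) hx.2
    simp only [coe_biUnion, Set.mem_iUnion, mem_coe]
    exact ⟨(j, σ), hP ▸ Finset.mem_product.2 ⟨Finset.mem_univ j, hσ⟩,
      Finset.mem_filter.2 ⟨Finset.mem_univ k, x, hxk, hxj⟩⟩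
  have hA : ∀ p ∈ P, #(A p) ≤ (Fintype.card ι + 1) * N ^ (Fintype.card ι - 1) := by
    rintro ⟨j, σ⟩ hp
    have hσ : |σ| = 1 := by
      rcases Finset.mem_insert.1 (Finset.mem_product.1 (hP ▸ hp)).2 with rfl | hσ
      · exact abs_one
      · rw [show σ = -1 from Finset.mem_singleton.1 hσ, abs_neg, abs_one]
    exact Finset.card_le_of_column_spread j _ fun k hk k' hk' hkk' =>
      val_le_add_card_of_gridCell_inter_supportClass hσ hkk' (Finset.mem_filter.1 hk).2
        (Finset.mem_filter.1 hk').2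
  calc _ ≤ (↑(P.biUnion A) : Set (ι → Fin N)).ncard :=
        Set.ncard_le_ncard hcover (Finset.finite_toSet _)
    _ = #(P.biUnion A) := Set.ncard_coe_finset _
    _ ≤ ∑ p ∈ P, #(A p) := Finset.card_biUnion_le
    _ ≤ ∑ _p ∈ P, (Fintype.card ι + 1) * N ^ (Fintype.card ι - 1) := Finset.sum_le_sum hA
    _ = 2 * Fintype.card ι * (Fintype.card ι + 1) * N ^ (Fintype.card ι - 1) := by
      rw [Finset.sum_const, hP, Finset.card_product, Finset.card_univ,
        Finset.card_pair (by norm_num : (1 : ℝ) ≠ -1), smul_eq_mul]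
      ring

/-- The number of cells of the dyadic grid of side `2^{−i}` on `[0,1]^d` whose intersection with
the boundary of a convex body `C` is nonempty is at most `c_d · 2^{i(d−1)}`, for a constant
`c_d` depending only on `d`. -/
theorem stmt10 (d : ℕ) :
    ∃ c : ℝ, 0 < c ∧
      ∀ (i : ℕ) (C : Set (Fin d → ℝ)), Convex ℝ C → IsCompact C → C.Nonempty →
        ({k : Fin d → Fin (2 ^ i) |
            ({x : Fin d → ℝ | ∀ j, x j ∈
                Set.Icc ((k j : ℝ) / 2 ^ i) (((k j : ℝ) + 1) / 2 ^ i)} ∩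
              frontier C).Nonempty}.ncard : ℝ) ≤ c * 2 ^ (i * (d - 1)) := by
  refine ⟨2 * d * (d + 1) + 1, by positivity, fun i C hC hCc _ => ?_⟩
  have hcount := hC.ncard_gridCell_inter_frontier_le hCc.isClosed (2 ^ i)
  rw [Fintype.card_fin, ← pow_mul] at hcount
  simp only [gridCell, Nat.cast_pow, Nat.cast_ofNat] at hcount
  calc _ ≤ (2 * d * (d + 1) : ℝ) * 2 ^ (i * (d - 1)) := by exact_mod_cast hcount
    _ ≤ _ := by gcongr; linarith
end

section
/- Let P' = {p₀, p₁, …, p_{q−1}} be points in [0,1]², and for each i let Lᵢ be a halfplane containing P' with pᵢ ∈ ∂Lᵢ, where the unit normal vectors of L₀,…,L_{q−1} are v_i = (sin(2πi/q), cos(2πi/q)). Let C = ∩ᵢ Lᵢ. Then the area of C \ conv(P') is at most K/q · perimeter(conv(P')) ≤ K'/q for absolute constants K, K', using that consecutive normal directions differ by angle 2π/q and that each triangle cut between an edge of conv(P') and the corresponding corner of C has area at most O(|edge| · 2π/q). -/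
open MeasureTheory Set
open Real Pointwise

/-!
Write `u(φ) = (sin φ, cos φ)`, so that `vᵢ = u(2πi/q)`. Every direction is `φ = 2πi/q + θ`
with `|θ| ≤ π/q`, and for `x ∈ C`
  `⟪u(φ), x - pᵢ⟫ = cos θ ⟪vᵢ, x - pᵢ⟫ + sin θ ⟪vᵢ^⊥, x - pᵢ⟫ ≤ |θ| |x - pᵢ| = O(1/q)`,
because `⟪vᵢ, x - pᵢ⟫ ≤ 0` and `C` is bounded. So no direction separates `x` from
`conv P' + [-e, e]²` with `e = O(1/q)`, and by Hahn–Banach `C ⊆ conv P' + [-e, e]²`.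
Thickening a convex body in `[0,1]²` by `[-e, e]²`, one coordinate at a time, lengthens each
slice by `2e`, so by Fubini it adds area `O(e)`.
-/

/-- The halfplanes of the statement are `{x | dirComp (2πi/q) x ≤ dirComp (2πi/q) (p i)}`. -/
noncomputable def dirComp (φ : ℝ) (z : ℝ × ℝ) : ℝ := sin φ * z.1 + cos φ * z.2

lemma dirComp_add_int_mul_two_pi (φ : ℝ) (k : ℤ) (z : ℝ × ℝ) :
    dirComp (φ + k * (2 * π)) z = dirComp φ z := by
  simp only [dirComp, sin_add_int_mul_two_pi, cos_add_int_mul_two_pi]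

lemma dirComp_add (φ : ℝ) (z w : ℝ × ℝ) :
    dirComp φ (z + w) = dirComp φ z + dirComp φ w := by
  simp only [dirComp, Prod.fst_add, Prod.snd_add]; ring

lemma dirComp_sub (φ : ℝ) (z w : ℝ × ℝ) :
    dirComp φ (z - w) = dirComp φ z - dirComp φ w := by
  simp only [dirComp, Prod.fst_sub, Prod.snd_sub]; ring

lemma dirComp_add_angle (α θ : ℝ) (z : ℝ × ℝ) :
    dirComp (α + θ) z = cos θ * dirComp α z + sin θ * dirComp (α + π / 2) z := by
  simp only [dirComp, sin_add, cos_add, sin_pi_div_two, cos_pi_div_two]; ring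

lemma dirComp_polar (ψ r φ : ℝ) : dirComp ψ (r * sin φ, r * cos φ) = r * cos (φ - ψ) := by
  simp only [dirComp, cos_sub]; ring

lemma abs_dirComp_le (φ : ℝ) (z : ℝ × ℝ) : |dirComp φ z| ≤ |z.1| + |z.2| := by
  unfold dirComp
  calc |sin φ * z.1 + cos φ * z.2| ≤ |sin φ| * |z.1| + |cos φ| * |z.2| := by
        simpa only [abs_mul] using abs_add_le (sin φ * z.1) (cos φ * z.2)
    _ ≤ 1 * |z.1| + 1 * |z.2| := by gcongr <;> simp only [abs_sin_le_one, abs_cos_le_one]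
    _ = |z.1| + |z.2| := by ring

lemma exists_polar (z : ℝ × ℝ) : ∃ r φ : ℝ, 0 ≤ r ∧ z = (r * sin φ, r * cos φ) := by
  refine ⟨‖(⟨z.2, z.1⟩ : ℂ)‖, Complex.arg ⟨z.2, z.1⟩, norm_nonneg _, ?_⟩
  rw [Complex.norm_mul_sin_arg, Complex.norm_mul_cos_arg]

lemma one_half_le_cos_of_abs_le {θ : ℝ} (hθ : |θ| ≤ π / 3) : 1 / 2 ≤ cos θ := by
  rw [← cos_abs, ← cos_pi_div_three]
  exact cos_le_cos_of_nonneg_of_le_pi (abs_nonneg θ) (by linarith [pi_pos]) hθ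

lemma pi_div_le_pi_div_three {q : ℕ} (hq : 3 ≤ q) : π / q ≤ π / 3 :=
  div_le_div_of_nonneg_left pi_pos.le (by norm_num) (by exact_mod_cast hq)

lemma exists_eq_two_pi_mul_div_add {q : ℕ} (hq : 0 < q) (φ : ℝ) :
    ∃ (i : Fin q) (θ : ℝ) (k : ℤ),
      |θ| ≤ π / q ∧ φ = 2 * π * (i : ℝ) / q + θ + k * (2 * π) := by
  have hq' : (0 : ℝ) < q := by exact_mod_cast hq
  set m : ℤ := round (φ * q / (2 * π))
  obtain ⟨n, hn⟩ : ∃ n : ℕ, (n : ℤ) = m % q :=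
    ⟨_, Int.toNat_of_nonneg (Int.emod_nonneg m (by omega))⟩
  have hnq : n < q := by have := Int.emod_lt_of_pos m (by omega : (0 : ℤ) < q); omega
  have hm : (m : ℝ) = n + q * (m / q : ℤ) := by
    rw [← Int.cast_natCast, hn]; exact_mod_cast (Int.emod_add_mul_ediv m q).symm
  refine ⟨⟨n, hnq⟩, φ - 2 * π * m / q, m / q, ?_, ?_⟩
  · have : φ - 2 * π * m / q = 2 * π / q * (φ * q / (2 * π) - m) := by field_simp
    rw [this, abs_mul, abs_of_pos (by positivity)]
    calc 2 * π / q * |φ * q / (2 * π) - m| ≤ 2 * π / q * (1 / 2) := by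
          gcongr; exact abs_sub_round _
      _ = π / q := by ring
  · simp only [hm]; field_simp; ring

section Polygon

variable {q : ℕ} {x : ℝ × ℝ}

lemma abs_add_abs_le_of_forall_dirComp_le (hq : 3 ≤ q) {c : ℝ}
    (hx : ∀ i : Fin q, dirComp (2 * π * (i : ℝ) / q) x ≤ c) : |x.1| + |x.2| ≤ 4 * c := by
  obtain ⟨r, φ, hr, rfl⟩ := exists_polar x
  obtain ⟨i, θ, k, hθ, rfl⟩ := exists_eq_two_pi_mul_div_add (by omega : 0 < q) φ
  have hcos := one_half_le_cos_of_abs_le (hθ.trans (pi_div_le_pi_div_three hq))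
  have hrc : r * cos θ ≤ c := by
    have := hx i
    rwa [dirComp_polar, add_sub_right_comm, add_sub_cancel_left, cos_add_int_mul_two_pi]
      at this
  simp only [abs_mul, abs_of_nonneg hr]
  nlinarith [abs_sin_le_one (2 * π * i / q + θ + k * (2 * π)),
    abs_cos_le_one (2 * π * i / q + θ + k * (2 * π))]

lemma exists_dirComp_le_add {ρ : ℝ} (hq : 3 ≤ q) (p : Fin q → ℝ × ℝ)
    (hp : ∀ i, |(p i).1| + |(p i).2| ≤ ρ)
    (hx : ∀ i : Fin q, dirComp (2 * π * (i : ℝ) / q) x ≤ dirComp (2 * π * (i : ℝ) / q) (p i))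
    (φ : ℝ) : ∃ i, dirComp φ x ≤ dirComp φ (p i) + 5 * ρ * π / q := by
  have hxρ : |x.1| + |x.2| ≤ 4 * ρ :=
    abs_add_abs_le_of_forall_dirComp_le hq fun i =>
      (hx i).trans ((le_abs_self _).trans ((abs_dirComp_le _ _).trans (hp i)))
  obtain ⟨i, θ, k, hθ, rfl⟩ := exists_eq_two_pi_mul_div_add (by omega : 0 < q) φ
  refine ⟨i, ?_⟩
  set α := 2 * π * (i : ℝ) / q
  set y := x - p i
  have hcos : 0 ≤ cos θ := by
    linarith [one_half_le_cos_of_abs_le (hθ.trans (pi_div_le_pi_div_three hq))]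
  have hnormal : cos θ * dirComp α y ≤ 0 :=
    mul_nonpos_of_nonneg_of_nonpos hcos (by rw [dirComp_sub]; linarith [hx i])
  have htangent : sin θ * dirComp (α + π / 2) y ≤ π / q * (5 * ρ) := by
    have hy : |y.1| + |y.2| ≤ 5 * ρ := by
      simp only [y, Prod.fst_sub, Prod.snd_sub]
      linarith [abs_sub x.1 (p i).1, abs_sub x.2 (p i).2, hp i]
    calc sin θ * dirComp (α + π / 2) y ≤ |sin θ| * |dirComp (α + π / 2) y| := by
          rw [← abs_mul]; exact le_abs_self _
      _ ≤ π / q * (5 * ρ) := by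
          gcongr
          · exact (abs_sin_le_abs).trans hθ
          · exact (abs_dirComp_le _ _).trans hy
  rw [dirComp_add_int_mul_two_pi, dirComp_add_int_mul_two_pi, ← sub_le_iff_le_add',
    ← dirComp_sub, dirComp_add_angle, show 5 * ρ * π / q = π / q * (5 * ρ) by ring]
  linarith

end Polygon

lemma ContinuousLinearMap.exists_eq_mul_dirComp (f : ℝ × ℝ →L[ℝ] ℝ) :
    ∃ r φ : ℝ, 0 ≤ r ∧ ∀ z, f z = r * dirComp φ z := by
  obtain ⟨r, φ, hr, hf⟩ := exists_polar (f (1, 0), f (0, 1))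
  simp only [Prod.mk.injEq] at hf
  refine ⟨r, φ, hr, fun z => ?_⟩
  have hz : z = z.1 • ((1 : ℝ), (0 : ℝ)) + z.2 • ((0 : ℝ), (1 : ℝ)) := by ext <;> simp
  rw [hz, map_add, map_smul, map_smul, hf.1, hf.2]
  simp only [dirComp, smul_eq_mul, Prod.fst_add, Prod.snd_add, Prod.smul_mk]; ring

lemma Convex.mem_of_forall_exists_dirComp_le {K : Set (ℝ × ℝ)} (hconv : Convex ℝ K)
    (hclosed : IsClosed K) {x : ℝ × ℝ} (hx : ∀ φ, ∃ z ∈ K, dirComp φ x ≤ dirComp φ z) :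
    x ∈ K := by
  by_contra hxK
  obtain ⟨f, u, hfK, hfx⟩ := geometric_hahn_banach_closed_point hconv hclosed hxK
  obtain ⟨r, φ, hr, hf⟩ := f.exists_eq_mul_dirComp
  obtain ⟨z, hzK, hz⟩ := hx φ
  have := hfK z hzK
  rw [hf] at this hfx
  linarith [mul_le_mul_of_nonneg_left hz hr]

lemma iInter_halfplanes_subset_convexHull_add_square {q : ℕ} {ρ : ℝ} (hq : 3 ≤ q)
    (p : Fin q → ℝ × ℝ) (hp : ∀ i, |(p i).1| + |(p i).2| ≤ ρ) :
    (⋂ i : Fin q, {x : ℝ × ℝ |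
        dirComp (2 * π * (i : ℝ) / q) x ≤ dirComp (2 * π * (i : ℝ) / q) (p i)}) ⊆
      convexHull ℝ (range p) + Icc (-(5 * ρ * π / q)) (5 * ρ * π / q) ×ˢ
        Icc (-(5 * ρ * π / q)) (5 * ρ * π / q) := by
  intro x hx
  set e := 5 * ρ * π / q
  have he : 0 ≤ e := by
    have := (add_nonneg (abs_nonneg _) (abs_nonneg _)).trans (hp ⟨0, by omega⟩)
    positivity
  have hconv := (convex_convexHull ℝ (range p)).add ((convex_Icc (-e) e).prod (convex_Icc (-e) e))
  refine hconv.mem_of_forall_exists_dirComp_le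
    (((finite_range p).isCompact_convexHull ℝ).add (isCompact_Icc.prod isCompact_Icc)).isClosed
    fun φ => ?_
  obtain ⟨i, hi⟩ := exists_dirComp_le_add hq p hp (mem_iInter.1 hx) φ
  have hs : (e * sin φ, e * cos φ) ∈ Icc (-e) e ×ˢ Icc (-e) e := by
    refine ⟨abs_le.1 ?_, abs_le.1 ?_⟩ <;>
      simpa only [abs_mul, abs_of_nonneg he] using
        mul_le_of_le_one_right he (by first | exact abs_sin_le_one φ | exact abs_cos_le_one φ)
  refine ⟨p i + (e * sin φ, e * cos φ),
    add_mem_add (subset_convexHull ℝ _ (mem_range_self i)) hs, ?_⟩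
  rwa [dirComp_add, dirComp_polar, sub_self, cos_zero, mul_one]

lemma Convex.volume_add_Icc_le {T : Set ℝ} (hconv : Convex ℝ T) (hT : IsCompact T) {e : ℝ}
    (he : 0 ≤ e) : volume (T + Icc (-e) e) ≤ volume T + ENNReal.ofReal (2 * e) := by
  rcases T.eq_empty_or_nonempty with rfl | hne
  · simp
  have hle : sInf T ≤ sSup T := csInf_le_csSup hne hT.bddBelow hT.bddAbove
  rw [eq_Icc_of_connected_compact (hconv.isConnected hne) hT, Icc_add_Icc hle (by linarith),
    Real.volume_Icc, Real.volume_Icc, ← ENNReal.ofReal_add (by linarith) (by linarith)]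
  exact ENNReal.ofReal_le_ofReal (by linarith)

lemma preimage_prodMk_add_zero_prod (W : Set (ℝ × ℝ)) (I : Set ℝ) (x : ℝ) :
    Prod.mk x ⁻¹' (W + {0} ×ˢ I) = Prod.mk x ⁻¹' W + I := by
  ext y
  simp only [mem_preimage, mem_add, mem_prod, mem_singleton_iff, Prod.exists]
  constructor
  · rintro ⟨a, b, hab, c, d, ⟨rfl, hd⟩, h⟩
    simp only [Prod.mk_add_mk, add_zero, Prod.mk.injEq] at h
    exact ⟨b, h.1 ▸ hab, d, hd, h.2⟩
  · rintro ⟨b, hb, d, hd, rfl⟩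
    exact ⟨x, b, hb, 0, d, ⟨rfl, hd⟩, by simp⟩

lemma Convex.preimage_prodMk {W : Set (ℝ × ℝ)} (hconv : Convex ℝ W) (x : ℝ) :
    Convex ℝ (Prod.mk x ⁻¹' W) := by
  have : Prod.mk x ⁻¹' W = LinearMap.inr ℝ ℝ ℝ ⁻¹' ((fun z => (x, 0) + z) ⁻¹' W) := by
    ext y; simp
  exact this ▸ (hconv.translate_preimage_right (x, 0)).linear_preimage (LinearMap.inr ℝ ℝ ℝ)

lemma IsCompact.preimage_prodMk {W : Set (ℝ × ℝ)} (hW : IsCompact W) (x : ℝ) :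
    IsCompact (Prod.mk x ⁻¹' W) :=
  (Isometry.of_dist_eq fun y y' => by simp [Prod.dist_eq]).isClosedEmbedding.isCompact_preimage hW

lemma Convex.volume_add_zero_prod_Icc_le {W : Set (ℝ × ℝ)} (hconv : Convex ℝ W)
    (hW : IsCompact W) {a b e : ℝ} (he : 0 ≤ e) (hsub : W ⊆ Prod.fst ⁻¹' Icc a b) :
    volume (W + {0} ×ˢ Icc (-e) e) ≤ volume W + ENNReal.ofReal (2 * e * (b - a)) := by
  set bump := (Icc a b).indicator fun _ => ENNReal.ofReal (2 * e)
  have hslice : ∀ x, volume (Prod.mk x ⁻¹' (W + {0} ×ˢ Icc (-e) e)) ≤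
      volume (Prod.mk x ⁻¹' W) + bump x := by
    intro x
    rw [preimage_prodMk_add_zero_prod]
    by_cases hx : x ∈ Icc a b
    · simp only [bump, indicator_of_mem hx]
      exact (hconv.preimage_prodMk x).volume_add_Icc_le (hW.preimage_prodMk x) he
    · have : Prod.mk x ⁻¹' W = ∅ := eq_empty_of_forall_notMem fun y hy => hx (hsub hy)
      simp [this]
  have hmeas : MeasurableSet (W + {0} ×ˢ Icc (-e) e) :=
    (hW.add (isCompact_singleton.prod isCompact_Icc)).measurableSet
  rw [Measure.volume_eq_prod, Measure.prod_apply hmeas, Measure.prod_apply hW.measurableSet]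
  calc ∫⁻ x, volume (Prod.mk x ⁻¹' (W + {0} ×ˢ Icc (-e) e))
      ≤ ∫⁻ x, (volume (Prod.mk x ⁻¹' W) + bump x) := lintegral_mono hslice
    _ = (∫⁻ x, volume (Prod.mk x ⁻¹' W)) + ENNReal.ofReal (2 * e * (b - a)) := by
        rw [lintegral_add_left (measurable_measure_prodMk_left hW.measurableSet),
          lintegral_indicator measurableSet_Icc, setLIntegral_const, Real.volume_Icc,
          ← ENNReal.ofReal_mul (by linarith)]

lemma preimage_swap_add_prod_zero (W : Set (ℝ × ℝ)) (I : Set ℝ) :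
    Prod.swap ⁻¹' (W + I ×ˢ {0}) = Prod.swap ⁻¹' W + {0} ×ˢ I := by
  simp only [← image_swap_eq_preimage_swap]
  rw [← image_swap_prod I {0}]
  exact image_add (AddEquiv.prodComm : ℝ × ℝ ≃+ ℝ × ℝ)

lemma Convex.volume_add_Icc_prod_zero_le {W : Set (ℝ × ℝ)} (hconv : Convex ℝ W)
    (hW : IsCompact W) {c d e : ℝ} (he : 0 ≤ e) (hsub : W ⊆ Prod.snd ⁻¹' Icc c d) :
    volume (W + Icc (-e) e ×ˢ {0}) ≤ volume W + ENNReal.ofReal (2 * e * (d - c)) := by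
  have hswap : MeasurePreserving (Prod.swap : ℝ × ℝ → ℝ × ℝ) := by
    rw [Measure.volume_eq_prod]; exact Measure.measurePreserving_swap
  have hmeas : MeasurableSet (W + Icc (-e) e ×ˢ {0}) :=
    (hW.add (isCompact_Icc.prod isCompact_singleton)).measurableSet
  rw [← hswap.measure_preimage hmeas.nullMeasurableSet, preimage_swap_add_prod_zero,
    ← hswap.measure_preimage hW.measurableSet.nullMeasurableSet]
  refine (hconv.linear_preimage (LinearEquiv.prodComm ℝ ℝ ℝ).toLinearMap
    ).volume_add_zero_prod_Icc_le ?_ he fun z hz => hsub hz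
  show IsCompact (Prod.swap ⁻¹' W)
  rw [← image_swap_eq_preimage_swap]
  exact hW.image continuous_swap

lemma Convex.volume_add_square_le {W : Set (ℝ × ℝ)} (hconv : Convex ℝ W) (hW : IsCompact W)
    {a b c d e : ℝ} (he : 0 ≤ e) (hsub : W ⊆ Icc a b ×ˢ Icc c d) :
    volume (W + Icc (-e) e ×ˢ Icc (-e) e) ≤
      volume W + ENNReal.ofReal (2 * e * (d - c)) +
        ENNReal.ofReal (2 * e * (b - a + 2 * e)) := by
  have hsquare :
      Icc (-e) e ×ˢ Icc (-e) e = Icc (-e) e ×ˢ {(0 : ℝ)} + {(0 : ℝ)} ×ˢ Icc (-e) e := by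
    rw [prod_add_prod_comm]; simp
  have hthick : W + Icc (-e) e ×ˢ {0} ⊆ Prod.fst ⁻¹' Icc (a - e) (b + e) := by
    rintro _ ⟨w, hw, s, ⟨⟨hs₁, hs₂⟩, -⟩, rfl⟩
    obtain ⟨hw₁, hw₂⟩ := (hsub hw).1
    exact ⟨by simp only [Prod.fst_add]; linarith, by simp only [Prod.fst_add]; linarith⟩
  rw [hsquare, ← add_assoc]
  calc volume (W + Icc (-e) e ×ˢ {0} + {0} ×ˢ Icc (-e) e)
      ≤ volume (W + Icc (-e) e ×ˢ {0}) + ENNReal.ofReal (2 * e * (b + e - (a - e))) :=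
        (hconv.add ((convex_Icc _ _).prod (convex_singleton _))).volume_add_zero_prod_Icc_le
          (hW.add (isCompact_Icc.prod isCompact_singleton)) he hthick
    _ ≤ volume W + ENNReal.ofReal (2 * e * (d - c)) +
          ENNReal.ofReal (2 * e * (b - a + 2 * e)) := by
        rw [show b + e - (a - e) = b - a + 2 * e by ring]
        gcongr
        exact hconv.volume_add_Icc_prod_zero_le hW he fun z hz => (hsub hz).2

/-- If `p₀,…,p_{q−1} ∈ [0,1]²` and `Lᵢ` is the halfplane with unit normal
`vᵢ = (sin(2πi/q), cos(2πi/q))` whose boundary passes through `pᵢ` and which contains all the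
points, then the area of `(⋂ᵢ Lᵢ) \ conv{p₀,…,p_{q−1}}` is at most `K/q` for an absolute
constant `K`. -/
theorem stmt14 :
    ∃ K : ℝ, 0 < K ∧
      ∀ (q : ℕ), 3 ≤ q → ∀ (p : Fin q → ℝ × ℝ),
        (∀ i, (p i).1 ∈ Set.Icc (0:ℝ) 1 ∧ (p i).2 ∈ Set.Icc (0:ℝ) 1) →
        (∀ i j : Fin q,
          Real.sin (2 * Real.pi * (i : ℝ) / q) * (p j).1 +
              Real.cos (2 * Real.pi * (i : ℝ) / q) * (p j).2 ≤
            Real.sin (2 * Real.pi * (i : ℝ) / q) * (p i).1 +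
              Real.cos (2 * Real.pi * (i : ℝ) / q) * (p i).2) →
        volume ((⋂ i : Fin q, {x : ℝ × ℝ |
            Real.sin (2 * Real.pi * (i : ℝ) / q) * x.1 +
                Real.cos (2 * Real.pi * (i : ℝ) / q) * x.2 ≤
              Real.sin (2 * Real.pi * (i : ℝ) / q) * (p i).1 +
                Real.cos (2 * Real.pi * (i : ℝ) / q) * (p i).2}) \
          convexHull ℝ (Set.range p)) ≤ ENNReal.ofReal (K / q) := by
  refine ⟨40 * π * (1 + 10 * π / 3), by positivity, fun q hq p hp _ => ?_⟩
  have hq' : (3 : ℝ) ≤ q := by exact_mod_cast hq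
  set e := 5 * 2 * π / q
  have he : 0 ≤ e := by positivity
  have hρ : ∀ i, |(p i).1| + |(p i).2| ≤ 2 := fun i => by
    obtain ⟨⟨h₁, h₁'⟩, h₂, h₂'⟩ := hp i
    rw [abs_of_nonneg h₁, abs_of_nonneg h₂]; linarith
  have hQ : convexHull ℝ (range p) ⊆ Icc 0 1 ×ˢ Icc 0 1 :=
    convexHull_min (range_subset_iff.2 hp) ((convex_Icc 0 1).prod (convex_Icc 0 1))
  have hQc : IsCompact (convexHull ℝ (range p)) := (finite_range p).isCompact_convexHull ℝ
  have hQS := (convex_convexHull ℝ (range p)).volume_add_square_le hQc he hQ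
  have h0 : (0 : ℝ × ℝ) ∈ Icc (-e) e ×ˢ Icc (-e) e :=
    ⟨⟨neg_nonpos.2 he, he⟩, neg_nonpos.2 he, he⟩
  refine (measure_mono (sdiff_subset_sdiff_left
    (iInter_halfplanes_subset_convexHull_add_square hq p hρ))).trans
    ((measure_sdiff_le_iff_le_add hQc.measurableSet.nullMeasurableSet (subset_add_left _ h0)
      hQc.measure_lt_top.ne).2 (hQS.trans ?_))
  rw [add_assoc, ← ENNReal.ofReal_add (by positivity) (by positivity)]
  gcongr
  have he3 : e ≤ 10 * π / 3 := by
    simp only [e]; gcongr; norm_num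
  calc 2 * e * (1 - 0) + 2 * e * (1 - 0 + 2 * e) = 4 * e * (1 + e) := by ring
    _ ≤ 4 * e * (1 + 10 * π / 3) := by gcongr
    _ = 40 * π * (1 + 10 * π / 3) / q := by simp only [e]; ring
end

section
/- Let Z be the vertex set of a regular 4q-gon inscribed in a circle, and let B ⊆ Z with |B| ≤ 2q. Then there exists a subset Z' ⊆ Z \ B with |Z'| = q such that no two points of Z' are adjacent vertices of the 4q-gon, and consequently the q 'ear' triangles △a_{i−1}a_i a_{i+1} for a_i ∈ Z' are pairwise interior-disjoint and each is disjoint from the interior of conv(B); hence area(conv(Z) \ conv(B)) ≥ q · η, where η is the common area of the ear triangles. -/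
open MeasureTheory Set
open scoped ENNReal

/-- The `i`-th vertex of the regular `4q`-gon inscribed in the unit circle. -/
noncomputable def gonVertex (q : ℕ) (i : ℤ) : ℝ × ℝ :=
  (Real.cos (2 * Real.pi * (i : ℝ) / (4 * q)), Real.sin (2 * Real.pi * (i : ℝ) / (4 * q)))

/-- The ear triangle at vertex `i` of the regular `4q`-gon. -/
noncomputable def ear (q : ℕ) (i : ℤ) : Set (ℝ × ℝ) :=
  convexHull ℝ {gonVertex q (i - 1), gonVertex q i, gonVertex q (i + 1)}

/-!
For a vertex `a_i`, the linear functional `x ↦ ⟪a_i, x⟫` equals `cos (2π / 4q)` at `a_{i ± 1}`,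
so it is at least this on the ear of `a_i` and at most this at every other vertex. Hence the ear
of `a_i` misses the interior of the convex hull of any set of vertices avoiding `a_i`: ears of
non-adjacent vertices are interior-disjoint, and ears of vertices outside `B` avoid the interior
of `conv B`. Among the at least `2q` vertices outside `B`, some `q` have indices of the same
parity, hence are pairwise non-adjacent. Their ears are rotations of one another, and up to the
null frontiers of convex sets they are disjoint pieces of `conv Z \ conv B`.
-/

open Real

theorem Real.cos_two_pi_mul_div_le (N : ℕ) {k : ℤ} (hk : ¬ (N : ℤ) ∣ k) :
    cos (2 * π * k / N) ≤ cos (2 * π / N) := by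
  rcases N.eq_zero_or_pos with rfl | hN
  · simp
  have hNR : (0 : ℝ) < N := by exact_mod_cast hN
  have cos_le_of_two_mul_le : ∀ m : ℤ, 1 ≤ m → 2 * m ≤ N →
      cos (2 * π * m / N) ≤ cos (2 * π / N) := by
    intro m h1 h2
    have h1' : (1 : ℝ) ≤ m := by exact_mod_cast h1
    have h2' : 2 * (m : ℝ) ≤ N := by exact_mod_cast h2
    apply cos_le_cos_of_nonneg_of_le_pi (by positivity)
    · rw [div_le_iff₀ hNR]; nlinarith [pi_pos]
    · exact div_le_div_of_nonneg_right (by nlinarith [pi_pos]) hNR.le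
  set r := k % N
  have hr0 : 0 < r :=
    (Int.emod_nonneg _ (by omega)).lt_of_ne fun h => hk (Int.dvd_of_emod_eq_zero h.symm)
  have hrN : r < N := Int.emod_lt_of_pos _ (by omega)
  have hkr : cos (2 * π * k / N) = cos (2 * π * r / N) := by
    have hk : (k : ℝ) = N * (k / N : ℤ) + r := by exact_mod_cast (Int.mul_ediv_add_emod k N).symm
    rw [hk, show 2 * π * (N * (k / N : ℤ) + r) / N = 2 * π * r / N + (k / N : ℤ) * (2 * π) by
      field_simp; ring, cos_add_int_mul_two_pi]
  rw [hkr]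
  rcases le_total (2 * r) N with h | h
  · exact cos_le_of_two_mul_le r hr0 h
  · rw [show 2 * π * r / N = 2 * π - 2 * π * (N - r : ℤ) / N by push_cast; field_simp; ring,
      cos_two_pi_sub]
    exact cos_le_of_two_mul_le _ (by omega) (by omega)

theorem interior_subset_setOf_lt_of_subset_setOf_le {E : Type*} [AddCommGroup E] [Module ℝ E]
    [TopologicalSpace E] [IsTopologicalAddGroup E] [ContinuousSMul ℝ E] {f : Module.Dual ℝ E}
    (hf : f ≠ 0) {s : Set E} {c : ℝ} (hs : s ⊆ {x | f x ≤ c}) :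
    interior s ⊆ {x | f x < c} := by
  intro x hx
  have hopen : IsOpen (f '' interior s) :=
    f.isOpenMap_of_finiteDimensional (f.surjective hf) _ isOpen_interior
  have hsub : f '' interior s ⊆ Iic c := image_subset_iff.2 (interior_subset.trans hs)
  have := interior_maximal hsub hopen
  rw [interior_Iic] at this
  exact this ⟨x, hx, rfl⟩

theorem sum_measure_le_measure_sdiff {α ι : Type*} [TopologicalSpace α] [MeasurableSpace α]
    [OpensMeasurableSpace α] {μ : Measure α} {Z : Finset ι} {T : ι → Set α} {C K : Set α}
    (hT : ∀ i ∈ Z, μ (frontier (T i)) = 0) (hC : μ (frontier C) = 0)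
    (hdisj : (Z : Set ι).Pairwise fun i j => Disjoint (interior (T i)) (interior (T j)))
    (hTC : ∀ i ∈ Z, Disjoint (T i) (interior C)) (hTK : ∀ i ∈ Z, T i ⊆ K) :
    ∑ i ∈ Z, μ (T i) ≤ μ (K \ C) := by
  have hpiece : ∀ i ∈ Z, μ (interior (T i) \ closure C) = μ (T i) := by
    intro i hi
    rw [measure_sdiff_null', measure_interior_of_null_frontier (hT i hi)]
    exact measure_mono_null (fun x hx => show x ∈ closure C \ interior C from
      ⟨hx.2, fun hxC => disjoint_left.1 (hTC i hi) (interior_subset hx.1) hxC⟩) hC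
  calc ∑ i ∈ Z, μ (T i) = ∑ i ∈ Z, μ (interior (T i) \ closure C) :=
        (Finset.sum_congr rfl hpiece).symm
    _ = μ (⋃ i ∈ Z, interior (T i) \ closure C) :=
        (measure_biUnion_finset
          (fun i hi j hj hij => (hdisj hi hj hij).mono sdiff_subset sdiff_subset)
          fun i _ => isOpen_interior.measurableSet.diff isClosed_closure.measurableSet).symm
    _ ≤ μ (K \ C) := measure_mono <| iUnion₂_subset fun i hi x hx =>
        ⟨hTK i hi (interior_subset hx.1), fun hxC => hx.2 (subset_closure hxC)⟩

theorem exists_sameParity_subset_Ico_sdiff (q : ℕ) {B : Finset ℤ} (hB : B.card ≤ 2 * q) :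
    ∃ Z ⊆ Finset.Ico (0 : ℤ) (4 * q) \ B, Z.card = q ∧ ∃ r, ∀ i ∈ Z, i % 2 = r := by
  have hcard : 2 * q ≤ (Finset.Ico (0 : ℤ) (4 * q) \ B).card := by
    have := Finset.le_card_sdiff B (Finset.Ico (0 : ℤ) (4 * q))
    simp only [Int.card_Ico, sub_zero] at this
    omega
  obtain ⟨r, -, hr⟩ := Finset.exists_le_card_fiber_of_mul_le_card_of_maps_to
    (s := Finset.Ico (0 : ℤ) (4 * q) \ B) (f := (· % 2))
    (t := Finset.Ico 0 2) (n := q) (fun a _ => by simp only [Finset.mem_Ico]; omega)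
    ⟨0, by simp⟩ (by simpa using hcard)
  obtain ⟨Z, hZ, hZcard⟩ := Finset.exists_subset_card_eq hr
  exact ⟨Z, hZ.trans (Finset.filter_subset _ _), hZcard, r,
    fun i hi => (Finset.mem_filter.1 (hZ hi)).2⟩

theorem not_dvd_sub_of_emod_two_eq {n i j k : ℤ} (hn : Even n) (hi : i ∈ Finset.Ico 0 n)
    (hj : j ∈ Finset.Ico 0 n) (hij : i ≠ j) (hpar : i % 2 = j % 2) (hk : |k - j| ≤ 1) :
    ¬ n ∣ k - i := by
  obtain ⟨m, rfl⟩ := hn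
  rw [Finset.mem_Ico] at hi hj
  rw [abs_le] at hk
  intro hd
  have := Int.eq_zero_of_abs_lt_dvd hd (abs_lt.2 ⟨by omega, by omega⟩)
  omega

-- `ℝ × ℝ` carries the sup norm and no inner product, so the Euclidean pairing is written out.
noncomputable def dotWith (u : ℝ × ℝ) : Module.Dual ℝ (ℝ × ℝ) :=
  u.1 • LinearMap.fst ℝ ℝ ℝ + u.2 • LinearMap.snd ℝ ℝ ℝ

@[simp]
theorem dotWith_apply (u x : ℝ × ℝ) : dotWith u x = u.1 * x.1 + u.2 * x.2 := rfl

noncomputable def planeRotation (θ : ℝ) : (ℝ × ℝ) →ₗ[ℝ] ℝ × ℝ :=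
  Matrix.toLin (Module.Basis.finTwoProd ℝ) (Module.Basis.finTwoProd ℝ)
    !![cos θ, -sin θ; sin θ, cos θ]

theorem det_planeRotation (θ : ℝ) : LinearMap.det (planeRotation θ) = 1 := by
  rw [planeRotation, LinearMap.det_toLin, Matrix.det_fin_two_of]
  linear_combination cos_sq_add_sin_sq θ

section Polygon

variable (q : ℕ)

theorem gonVertex_add_mul (k n : ℤ) : gonVertex q (k + 4 * q * n) = gonVertex q k := by
  rcases q.eq_zero_or_pos with rfl | hq
  · simp [gonVertex]
  have h : 2 * π * ((k + 4 * q * n : ℤ) : ℝ) / (4 * q) = 2 * π * k / (4 * q) + n * (2 * π) := by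
    push_cast; field_simp
  simp only [gonVertex, h, cos_add_int_mul_two_pi, sin_add_int_mul_two_pi]

theorem gonVertex_mem_image_Ico (hq : 0 < q) (k : ℤ) :
    gonVertex q k ∈ gonVertex q '' Ico (0 : ℤ) (4 * q) :=
  ⟨k % (4 * q), ⟨Int.emod_nonneg _ (by omega), Int.emod_lt_of_pos _ (by omega)⟩, by
    rw [← gonVertex_add_mul q _ (k / (4 * q)), add_comm, Int.mul_ediv_add_emod]⟩

theorem dotWith_gonVertex (i j : ℤ) :
    dotWith (gonVertex q i) (gonVertex q j) = cos (2 * π * (j - i : ℤ) / (4 * q)) := by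
  rw [show 2 * π * (j - i : ℤ) / (4 * q) = 2 * π * j / (4 * q) - 2 * π * i / (4 * q) by
    push_cast; ring, cos_sub]
  simp only [dotWith_apply, gonVertex]
  ring

theorem dotWith_gonVertex_ne_zero (i : ℤ) : dotWith (gonVertex q i) ≠ 0 := fun h => by
  simpa [h] using dotWith_gonVertex q i i

theorem dotWith_gonVertex_le {i j : ℤ} (h : ¬ (4 * q : ℤ) ∣ j - i) :
    dotWith (gonVertex q i) (gonVertex q j) ≤ cos (2 * π / (4 * q)) := by
  have := Real.cos_two_pi_mul_div_le (4 * q) (k := j - i) (by exact_mod_cast h)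
  rw [dotWith_gonVertex]
  exact_mod_cast this

theorem convexHull_gonVertex_subset_setOf_dotWith_le {i : ℤ} {s : Set ℤ}
    (h : ∀ j ∈ s, ¬ (4 * q : ℤ) ∣ j - i) :
    convexHull ℝ (gonVertex q '' s) ⊆ {x | dotWith (gonVertex q i) x ≤ cos (2 * π / (4 * q))} :=
  convexHull_min (by rintro _ ⟨j, hj, rfl⟩; exact dotWith_gonVertex_le q (h j hj))
    (convex_halfSpace_le (dotWith _).isLinear _)

theorem ear_eq_convexHull_image (i : ℤ) :
    ear q i = convexHull ℝ (gonVertex q '' {i - 1, i, i + 1}) := by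
  simp only [ear, image_insert_eq, image_singleton]

theorem ear_subset_setOf_cos_le_dotWith (i : ℤ) :
    ear q i ⊆ {x | cos (2 * π / (4 * q)) ≤ dotWith (gonVertex q i) x} := by
  refine convexHull_min ?_ (convex_halfSpace_ge (dotWith _).isLinear _)
  rintro _ (rfl | rfl | rfl) <;> simp only [mem_ofPred_eq, dotWith_gonVertex]
  · simp [neg_div]
  · simp [cos_le_one]
  · simp

theorem disjoint_ear_interior_convexHull {i : ℤ} {s : Set ℤ}
    (h : ∀ j ∈ s, ¬ (4 * q : ℤ) ∣ j - i) :
    Disjoint (ear q i) (interior (convexHull ℝ (gonVertex q '' s))) := by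
  refine disjoint_left.2 fun x hx hxs => ?_
  have hle : cos (2 * π / (4 * q)) ≤ dotWith (gonVertex q i) x :=
    ear_subset_setOf_cos_le_dotWith q i hx
  exact hle.not_gt (interior_subset_setOf_lt_of_subset_setOf_le (dotWith_gonVertex_ne_zero q i)
    (convexHull_gonVertex_subset_setOf_dotWith_le q h) hxs)

theorem disjoint_ear_interior_ear {i j : ℤ} (hi : i ∈ Finset.Ico (0 : ℤ) (4 * q))
    (hj : j ∈ Finset.Ico (0 : ℤ) (4 * q)) (hij : i ≠ j) (hpar : i % 2 = j % 2) :
    Disjoint (ear q i) (interior (ear q j)) := by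
  rw [ear_eq_convexHull_image q j]
  refine disjoint_ear_interior_convexHull q fun k hk =>
    not_dvd_sub_of_emod_two_eq ⟨2 * q, by ring⟩ hi hj hij hpar ?_
  rcases hk with rfl | rfl | rfl <;> simp

theorem disjoint_ear_interior_convexHull_of_notMem {B : Finset ℤ} {i : ℤ}
    (hB : B ⊆ Finset.Ico (0 : ℤ) (4 * q)) (hi : i ∈ Finset.Ico (0 : ℤ) (4 * q)) (hiB : i ∉ B) :
    Disjoint (ear q i) (interior (convexHull ℝ (gonVertex q '' B))) := by
  refine disjoint_ear_interior_convexHull q fun j hj hd => hiB ?_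
  have hi' := Finset.mem_Ico.1 hi
  have hj' := Finset.mem_Ico.1 (hB hj)
  have := Int.eq_zero_of_abs_lt_dvd hd (abs_lt.2 ⟨by omega, by omega⟩)
  rwa [show i = j by omega]

theorem ear_subset_convexHull (hq : 0 < q) (i : ℤ) :
    ear q i ⊆ convexHull ℝ (gonVertex q '' Ico (0 : ℤ) (4 * q)) := by
  rw [ear_eq_convexHull_image]
  exact convexHull_mono (image_subset_iff.2 fun k _ => gonVertex_mem_image_Ico q hq k)

theorem planeRotation_gonVertex (i k : ℤ) :
    planeRotation (2 * π * i / (4 * q)) (gonVertex q k) = gonVertex q (k + i) := by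
  have h : 2 * π * ((k + i : ℤ) : ℝ) / (4 * q) = 2 * π * k / (4 * q) + 2 * π * i / (4 * q) := by
    push_cast; ring
  rw [planeRotation, Matrix.toLin_finTwoProd_apply]
  simp only [gonVertex, h, cos_add, sin_add]
  exact Prod.ext (by ring) (by ring)

theorem image_planeRotation_ear (i : ℤ) :
    planeRotation (2 * π * i / (4 * q)) '' ear q 0 = ear q i := by
  simp only [ear, LinearMap.image_convexHull, image_insert_eq, image_singleton,
    planeRotation_gonVertex, zero_add, zero_sub, neg_add_eq_sub, add_comm 1 i]

theorem volume_ear (i : ℤ) : volume (ear q i) = volume (ear q 0) := by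
  rw [← image_planeRotation_ear, Measure.addHaar_image_linearMap, det_planeRotation]
  simp

end Polygon

/-- From any `B ⊆ Z` with `|B| ≤ 2q` among the vertices of a regular `4q`-gon, one can choose
`q` pairwise non-adjacent vertices outside `B`, whose ear triangles are pairwise
interior-disjoint and disjoint from the interior of `conv(B)`; consequently
`area(conv(Z) \ conv(B)) ≥ q·η` where `η` is the common ear area. -/
theorem stmt18 (q : ℕ) (hq : 1 ≤ q) (B : Finset ℤ)
    (hB : B ⊆ Finset.Ico (0 : ℤ) (4 * q)) (hBcard : B.card ≤ 2 * q) :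
    ∃ Z' : Finset ℤ, Z' ⊆ Finset.Ico (0 : ℤ) (4 * q) ∧ (∀ i ∈ Z', i ∉ B) ∧ Z'.card = q ∧
      (∀ i ∈ Z', ∀ j ∈ Z', i ≠ j → |i - j| ≠ 1 ∧ |i - j| ≠ 4 * q - 1) ∧
      (∀ i ∈ Z', ∀ j ∈ Z', i ≠ j → interior (ear q i) ∩ interior (ear q j) = ∅) ∧
      (∀ i ∈ Z', ear q i ∩ interior (convexHull ℝ (gonVertex q '' (B : Set ℤ))) = ∅) ∧
      (q : ℝ≥0∞) * volume (ear q 0) ≤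
        volume (convexHull ℝ (gonVertex q '' (Set.Ico (0 : ℤ) (4 * q))) \
          convexHull ℝ (gonVertex q '' (B : Set ℤ))) := by
  obtain ⟨Z', hZ', hcard, r, hr⟩ := exists_sameParity_subset_Ico_sdiff q hBcard
  have hZ'Ico : Z' ⊆ Finset.Ico (0 : ℤ) (4 * q) := hZ'.trans Finset.sdiff_subset
  have hZ'B : ∀ i ∈ Z', i ∉ B := fun i hi => (Finset.mem_sdiff.1 (hZ' hi)).2
  have hears : ∀ i ∈ Z', ∀ j ∈ Z', i ≠ j → Disjoint (ear q i) (interior (ear q j)) :=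
    fun i hi j hj hij => disjoint_ear_interior_ear q (hZ'Ico hi) (hZ'Ico hj) hij
      ((hr i hi).trans (hr j hj).symm)
  have hearB : ∀ i ∈ Z', Disjoint (ear q i) (interior (convexHull ℝ (gonVertex q '' B))) :=
    fun i hi => disjoint_ear_interior_convexHull_of_notMem q hB (hZ'Ico hi) (hZ'B i hi)
  refine ⟨Z', hZ'Ico, hZ'B, hcard, fun i hi j hj hij => ?_, fun i hi j hj hij => ?_,
    fun i hi => disjoint_iff_inter_eq_empty.1 (hearB i hi), ?_⟩
  · have := (hr i hi).trans (hr j hj).symm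
    rcases abs_cases (i - j) with ⟨h, _⟩ | ⟨h, _⟩ <;> rw [h] <;> omega
  · exact disjoint_iff_inter_eq_empty.1 ((hears i hi j hj hij).mono_left interior_subset)
  calc (q : ℝ≥0∞) * volume (ear q 0) = ∑ i ∈ Z', volume (ear q i) := by
        simp [volume_ear, hcard]
    _ ≤ _ := sum_measure_le_measure_sdiff
        (fun i _ => (convex_convexHull ℝ _).addHaar_frontier volume)
        ((convex_convexHull ℝ _).addHaar_frontier volume)
        (fun i hi j hj hij => (hears i hi j hj hij).mono_left interior_subset) hearB
        (fun i _ => ear_subset_convexHull q hq i)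
end
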